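/- For every integer d ≥ 2, the function p ↦ M^{d,p} is continuous on the open interval (1/(d+1), 1/2). (Lemma 7(i).) -/

import Mathlib

open Real Finset

/-- `frogT x y u = s_{u+1,u}(x,y)`, the diagonal of the recursion. -/
noncomputable def frogT (x y : ℝ) : ℕ → ℝ
  | 0 => 1
  | k + 1 => 1 - ∑ i ∈ (Finset.range (k + 1)).attach,
      (((k + 1).choose i.1 : ℕ) : ℝ) * (x * y ^ (i.1 + 1)) ^ (k + 1 - i.1) * frogT x y i.1
  decreasing_by exact Finset.mem_range.mp i.2

/-- `frogS d u x y = s_{d,u}(x,y)`. -/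
noncomputable def frogS (d u : ℕ) (x y : ℝ) : ℝ :=
  (((d - 1).choose u : ℕ) : ℝ) * (x * y ^ (u + 1)) ^ (d - 1 - u) * frogT x y u

noncomputable def pstar (d : ℕ) (p : ℝ) : ℝ := p * ((d : ℝ) - 1) / ((d : ℝ) - ((d : ℝ) + 1) * p)

noncomputable def phat (p : ℝ) : ℝ := p / (1 - p)

noncomputable def Phi (d : ℕ) (p : ℝ) : ℝ := Real.exp (-(1 - pstar d p) / (d : ℝ))

noncomputable def Lam (d : ℕ) (p l : ℝ) : ℝ := Real.exp (-((1 - phat p) * l) / ((d : ℝ) - 1))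

noncomputable def frogF (d : ℕ) (p l : ℝ) : ℝ :=
  Real.exp (-(pstar d p)) * ∑ u ∈ Finset.range d,
    Real.exp ((1 - phat p * (1 + (u : ℝ))) * l) * frogS d u (Phi d p) (Lam d p l)

noncomputable def frogM (d : ℕ) (p : ℝ) : ℝ := sSup (frogF d p '' Set.Ici 0)

/-! The `u = 0` term of `frogF d p` is the constant `e^{-p*} Φ^{d-1}`, and since `p̂ d > 1` every
other term decays exponentially in `λ`, uniformly for `p` in a compact subinterval. As
`frogF d p 0 = e^{-p*}` exceeds that constant, the supremum defining `frogM d p` is attained on a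
fixed interval `[0, L]` for all such `p`, and the supremum over a compact set of a jointly
continuous function is continuous. -/

open Set Filter Topology

lemma frogT_zero (x y : ℝ) : frogT x y 0 = 1 := by
  rw [frogT]

lemma frogT_succ (x y : ℝ) (k : ℕ) :
    frogT x y (k + 1) = 1 - ∑ i ∈ range (k + 1), frogS (k + 2) i x y := by
  rw [frogT, ← sum_attach (range (k + 1))]
  rfl

lemma sum_frogS (x y : ℝ) {d : ℕ} (hd : 1 ≤ d) : ∑ u ∈ range d, frogS d u x y = 1 := by
  obtain rfl | ⟨k, rfl⟩ : d = 1 ∨ ∃ k, d = k + 2 := by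
    rcases Nat.exists_eq_add_of_le hd with ⟨_ | k, rfl⟩
    · exact .inl rfl
    · exact .inr ⟨k, by ring⟩
  · simp [frogS, frogT_zero]
  · rw [sum_range_succ, show frogS (k + 2) (k + 1) x y = frogT x y (k + 1) by simp [frogS],
      frogT_succ]
    ring

lemma continuous_frogT (k : ℕ) : Continuous fun q : ℝ × ℝ => frogT q.1 q.2 k := by
  induction k using Nat.strong_induction_on with
  | _ k ih =>
    cases k with
    | zero => simpa only [frogT_zero] using continuous_const
    | succ k =>
      simp only [frogT_succ, frogS]
      exact continuous_const.sub <| continuous_finsetSum _ fun i hi =>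
        (continuous_const.mul (by fun_prop)).mul (ih i (by simpa using hi))

lemma continuous_frogS (d u : ℕ) : Continuous fun q : ℝ × ℝ => frogS d u q.1 q.2 :=
  (continuous_const.mul (by fun_prop)).mul (continuous_frogT u)

lemma exists_abs_frogT_le (k : ℕ) : ∃ C, ∀ x ∈ Icc (0 : ℝ) 1, ∀ y ∈ Icc (0 : ℝ) 1,
    |frogT x y k| ≤ C := by
  obtain ⟨C, hC⟩ := (isCompact_Icc.prod isCompact_Icc).exists_bound_of_continuousOn
    (continuous_frogT k).continuousOn
  exact ⟨C, fun x hx y hy => hC (x, y) ⟨hx, hy⟩⟩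

section parameters

variable {d : ℕ} {p q : ℝ}

lemma pstar_denom_pos (hd : 1 ≤ d) (hp : p < 1 / 2) : 0 < (d : ℝ) - ((d : ℝ) + 1) * p := by
  have : (1 : ℝ) ≤ d := by exact_mod_cast hd
  nlinarith

lemma pstar_lt_one (hd : 1 ≤ d) (hp : p < 1 / 2) : pstar d p < 1 := by
  have : (1 : ℝ) ≤ d := by exact_mod_cast hd
  rw [pstar, div_lt_one (pstar_denom_pos hd hp)]
  nlinarith

lemma pstar_le_pstar (hd : 1 ≤ d) (hp : 0 ≤ p) (hpq : p ≤ q) (hq : q < 1 / 2) :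
    pstar d p ≤ pstar d q := by
  have : (1 : ℝ) ≤ d := by exact_mod_cast hd
  exact div_le_div₀ (by nlinarith) (by nlinarith) (pstar_denom_pos hd hq) (by nlinarith)

lemma Phi_lt_one (hd : 1 ≤ d) (hp : p < 1 / 2) : Phi d p < 1 := by
  have : (0 : ℝ) < d := by exact_mod_cast hd
  rw [Phi, Real.exp_lt_one_iff]
  exact div_neg_of_neg_of_pos (by linarith [pstar_lt_one hd hp]) this

lemma Phi_le_Phi (hd : 1 ≤ d) (hp : 0 ≤ p) (hpq : p ≤ q) (hq : q < 1 / 2) :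
    Phi d p ≤ Phi d q := by
  have : (0 : ℝ) < d := by exact_mod_cast hd
  rw [Phi, Phi, exp_le_exp]
  gcongr
  exact pstar_le_pstar hd hp hpq hq

lemma phat_le_phat (hp : 0 ≤ p) (hpq : p ≤ q) (hq : q < 1) : phat p ≤ phat q :=
  div_le_div₀ (by linarith) hpq (by linarith) (by linarith)

lemma one_lt_phat_mul (hp : 1 / ((d : ℝ) + 1) < p) (hp' : p < 1) : 1 < phat p * d := by
  rw [div_lt_iff₀ (by positivity)] at hp
  rw [phat, div_mul_eq_mul_div, one_lt_div (by linarith)]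
  linarith

lemma Lam_le_one (hd : 1 ≤ d) (hp : p < 1 / 2) {l : ℝ} (hl : 0 ≤ l) : Lam d p l ≤ 1 := by
  have : (1 : ℝ) ≤ d := by exact_mod_cast hd
  have : phat p < 1 := by
    rw [phat, div_lt_one (by linarith)]
    linarith
  rw [Lam, Real.exp_le_one_iff]
  exact div_nonpos_of_nonpos_of_nonneg (by nlinarith) (by linarith)

end parameters

/-- `e^{(1 - a(1+u))λ} Λ^{(u+1)(d-1-u)} = e^{frogRate d a u * λ}`
when `Λ = e^{-(1-a)λ/(d-1)}`. -/
noncomputable def frogRate (d : ℕ) (a : ℝ) (u : ℕ) : ℝ :=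
  u * ((u + 1) * (1 - a) - (d - 1)) / (d - 1)

section frogRate

variable {d u : ℕ} {a b : ℝ}

lemma frogRate_neg (hu : 1 ≤ u) (hud : u < d) (ha : 1 < a * d) : frogRate d a u < 0 := by
  have hu' : (1 : ℝ) ≤ u := by exact_mod_cast hu
  have hud' : (u : ℝ) + 1 ≤ d := by exact_mod_cast hud
  refine div_neg_of_neg_of_pos (mul_neg_of_pos_of_neg (by linarith) ?_) (by linarith)
  nlinarith

lemma frogRate_anti (hd : 1 ≤ d) (hab : a ≤ b) : frogRate d b u ≤ frogRate d a u := by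
  have : (1 : ℝ) ≤ d := by exact_mod_cast hd
  unfold frogRate
  gcongr

lemma exp_mul_frogS_Lam (hd : 2 ≤ d) (hu : u < d) (p x l : ℝ) :
    exp ((1 - phat p * (1 + u)) * l) * frogS d u x (Lam d p l) =
      exp (frogRate d (phat p) u * l) *
        ((d - 1).choose u * x ^ (d - 1 - u) * frogT x (Lam d p l) u) := by
  have hd' : (2 : ℝ) ≤ d := by exact_mod_cast hd
  have hcast : (((u + 1) * (d - 1 - u) : ℕ) : ℝ) = (u + 1) * (d - 1 - u) := by
    rw [Nat.cast_mul, Nat.cast_sub (by omega), Nat.cast_sub (by omega)]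
    push_cast
    ring
  have hLam : (Lam d p l ^ (u + 1)) ^ (d - 1 - u) =
      exp ((u + 1) * (d - 1 - u) * (-((1 - phat p) * l) / (d - 1))) := by
    rw [Lam, ← pow_mul, ← Real.exp_nat_mul, hcast]
  rw [frogS, mul_pow, hLam]
  have hsplit : frogRate d (phat p) u * l = (1 - phat p * (1 + u)) * l +
      (u + 1) * (d - 1 - u) * (-((1 - phat p) * l) / (d - 1)) := by
    have : (d : ℝ) - 1 ≠ 0 := by linarith
    rw [frogRate]
    field_simp
    ring
  rw [hsplit, Real.exp_add]
  ring

end frogRate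

lemma frogF_zero {d : ℕ} (hd : 1 ≤ d) (p : ℝ) : frogF d p 0 = exp (-pstar d p) := by
  simp only [frogF, mul_zero, Real.exp_zero, one_mul, sum_frogS _ _ hd, mul_one]

lemma frogF_eq {d : ℕ} (hd : 2 ≤ d) (p l : ℝ) :
    frogF d p l = exp (-pstar d p) * (Phi d p ^ (d - 1) + ∑ u ∈ Ico 1 d,
      exp (frogRate d (phat p) u * l) *
        ((d - 1).choose u * Phi d p ^ (d - 1 - u) * frogT (Phi d p) (Lam d p l) u)) := by
  rw [frogF, range_eq_Ico, sum_eq_sum_Ico_succ_bot (by omega),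
    sum_congr rfl fun u hu => exp_mul_frogS_Lam hd (mem_Ico.mp hu).2 p (Phi d p) l,
    exp_mul_frogS_Lam hd (by omega)]
  simp [frogRate, frogT_zero]

lemma continuousOn_frogF {d : ℕ} (hd : 1 ≤ d) :
    ContinuousOn (fun q : ℝ × ℝ => frogF d q.1 q.2) (Set.Iio (1 / 2) ×ˢ Set.univ) := by
  have hden : ∀ q ∈ Set.Iio (1 / 2 : ℝ) ×ˢ (Set.univ : Set ℝ),
      (d : ℝ) - ((d : ℝ) + 1) * q.1 ≠ 0 ∧ 1 - q.1 ≠ 0 := fun q hq =>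
    ⟨(pstar_denom_pos hd hq.1).ne', by linarith [mem_Iio.mp hq.1]⟩
  have hpstar : ContinuousOn (fun q : ℝ × ℝ => pstar d q.1) (Set.Iio (1 / 2) ×ˢ Set.univ) :=
    ContinuousOn.div (by fun_prop) (by fun_prop) fun q hq => (hden q hq).1
  have hphat : ContinuousOn (fun q : ℝ × ℝ => phat q.1) (Set.Iio (1 / 2) ×ˢ Set.univ) :=
    ContinuousOn.div (by fun_prop) (by fun_prop) fun q hq => (hden q hq).2
  have hPhi : ContinuousOn (fun q : ℝ × ℝ => Phi d q.1) (Set.Iio (1 / 2) ×ˢ Set.univ) :=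
    continuous_exp.comp_continuousOn ((continuousOn_const.sub hpstar).neg.div_const _)
  have hLam : ContinuousOn (fun q : ℝ × ℝ => Lam d q.1 q.2) (Set.Iio (1 / 2) ×ˢ Set.univ) :=
    continuous_exp.comp_continuousOn
      (((continuousOn_const.sub hphat).mul continuousOn_snd).neg.div_const _)
  refine (continuous_exp.comp_continuousOn hpstar.neg).mul
    (continuousOn_finsetSum _ fun u _ => ContinuousOn.mul ?_ ?_)
  · exact continuous_exp.comp_continuousOn
      ((continuousOn_const.sub (hphat.mul continuousOn_const)).mul continuousOn_snd)
  · exact (continuous_frogS d u).comp_continuousOn (hPhi.prodMk hLam)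

lemma csSup_image_Ici_eq_csSup_image_Icc {g : ℝ → ℝ} {a L : ℝ} (haL : a ≤ L)
    (hg : ContinuousOn g (Icc a L)) (htail : ∀ l, L ≤ l → g l ≤ g a) :
    sSup (g '' Ici a) = sSup (g '' Icc a L) := by
  have hbdd := isCompact_Icc.bddAbove_image hg
  have hne : (g '' Icc a L).Nonempty := (Set.nonempty_Icc.mpr haL).image g
  have hle : ∀ l ∈ Ici a, g l ≤ sSup (g '' Icc a L) := fun l hl => by
    rcases le_total l L with hlL | hLl
    · exact le_csSup hbdd (mem_image_of_mem g ⟨hl, hlL⟩)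
    · exact (htail l hLl).trans (le_csSup hbdd (mem_image_of_mem g ⟨le_rfl, haL⟩))
  refine le_antisymm (csSup_le (hne.mono (image_mono Icc_subset_Ici_self)) ?_)
    (csSup_le_csSup ⟨_, forall_mem_image.mpr hle⟩ hne (image_mono Icc_subset_Ici_self))
  exact forall_mem_image.mpr hle

lemma IsCompact.continuousOn_sSup {α β γ : Type*} [TopologicalSpace α] [TopologicalSpace β]
    [ConditionallyCompleteLinearOrder γ] [TopologicalSpace γ] [OrderTopology γ]
    {f : α → β → γ} {s : Set α} {K : Set β} (hK : IsCompact K)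
    (hf : ContinuousOn ↿f (s ×ˢ Set.univ)) : ContinuousOn (fun x => sSup (f x '' K)) s := by
  rw [continuousOn_iff_continuous_domRestrict]
  exact hK.continuous_sSup (f := fun x : s => f x)
    (hf.comp_continuous (f := fun q : s × β => ((q.1 : α), q.2)) (by fun_prop)
      fun q => ⟨q.1.2, trivial⟩)

lemma exp_frogRate_mul_le {d u : ℕ} (hd : 1 ≤ d) {a b x y l C : ℝ} (hab : a ≤ b)
    (hl : 0 ≤ l) (hx : x ∈ Set.Icc (0 : ℝ) 1) (hT : |frogT x y u| ≤ C) :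
    exp (frogRate d b u * l) * ((d - 1).choose u * x ^ (d - 1 - u) * frogT x y u) ≤
      (d - 1).choose u * C * exp (frogRate d a u * l) := by
  have hweight : |(d - 1).choose u * x ^ (d - 1 - u) * frogT x y u| ≤ (d - 1).choose u * C := by
    rw [abs_mul, abs_mul, abs_of_nonneg (by positivity), abs_of_nonneg (pow_nonneg hx.1 _)]
    exact mul_le_mul (mul_le_of_le_one_right (by positivity) (pow_le_one₀ hx.1 hx.2))
      hT (abs_nonneg _) (by positivity)
  have hexp : exp (frogRate d b u * l) ≤ exp (frogRate d a u * l) := by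
    gcongr
    exact frogRate_anti hd hab
  calc _ ≤ exp (frogRate d b u * l) * ((d - 1).choose u * C) :=
        mul_le_mul_of_nonneg_left ((le_abs_self _).trans hweight) (exp_pos _).le
    _ ≤ exp (frogRate d a u * l) * ((d - 1).choose u * C) :=
        mul_le_mul_of_nonneg_right hexp ((abs_nonneg _).trans hweight)
    _ = _ := by ring

lemma exists_frogF_le_frogF_zero {d : ℕ} (hd : 2 ≤ d) {p₁ p₂ : ℝ}
    (hp₁ : 1 / ((d : ℝ) + 1) < p₁) (hp₁₂ : p₁ ≤ p₂) (hp₂ : p₂ < 1 / 2) :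
    ∃ L, 0 ≤ L ∧ ∀ p ∈ Set.Icc p₁ p₂, ∀ l, L ≤ l →
      frogF d p l ≤ frogF d p 0 := by
  choose C hC using exists_abs_frogT_le
  have hp₁pos : 0 < p₁ := lt_trans (by positivity) hp₁
  set tail := fun l =>
    ∑ u ∈ Ico 1 d, (d - 1).choose u * C u * exp (frogRate d (phat p₁) u * l)
  have htail : Tendsto tail atTop (𝓝 0) := by
    rw [show (0 : ℝ) = ∑ u ∈ Ico 1 d, (d - 1).choose u * C u * 0 by simp]
    refine tendsto_finsetSum _ fun u hu => Tendsto.const_mul _ ?_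
    have hrate := frogRate_neg (mem_Ico.mp hu).1 (mem_Ico.mp hu).2
      (one_lt_phat_mul hp₁ (by linarith))
    exact tendsto_exp_atBot.comp (tendsto_id.const_mul_atTop_of_neg hrate)
  have hgap : 0 < 1 - Phi d p₂ ^ (d - 1) :=
    sub_pos.mpr (pow_lt_one₀ (exp_pos _).le (Phi_lt_one (by omega) hp₂) (by omega))
  obtain ⟨L, hL⟩ := eventually_atTop.mp (htail.eventually (gt_mem_nhds hgap))
  refine ⟨max L 0, le_max_right _ _, fun p hp l hl => ?_⟩
  have hp' : p < 1 / 2 := hp.2.trans_lt hp₂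
  have hΦ : Phi d p ∈ Set.Icc (0 : ℝ) 1 := ⟨(exp_pos _).le, (Phi_lt_one (by omega) hp').le⟩
  have hΛ : Lam d p l ∈ Set.Icc (0 : ℝ) 1 :=
    ⟨(exp_pos _).le, Lam_le_one (by omega) hp' (le_of_max_le_right hl)⟩
  have hterms := sum_le_sum fun u (_ : u ∈ Finset.Ico 1 d) =>
    exp_frogRate_mul_le (d := d) (by omega) (phat_le_phat hp₁pos.le hp.1 (by linarith))
      (le_of_max_le_right hl) hΦ (hC u _ hΦ _ hΛ)
  have hΦp : Phi d p ^ (d - 1) ≤ Phi d p₂ ^ (d - 1) :=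
    pow_le_pow_left₀ hΦ.1 (Phi_le_Phi (by omega) (hp₁pos.le.trans hp.1) hp.2 hp₂) _
  rw [frogF_eq hd, frogF_zero (by omega)]
  refine mul_le_of_le_one_right (exp_pos _).le ?_
  linarith [hL l (le_of_max_le_left hl)]

/-- Lemma 7(i): for every integer `d ≥ 2`, the map `p ↦ M^{d,p}` is continuous
on the open interval `(1/(d+1), 1/2)`. -/
theorem frogM_continuousOn (d : ℕ) (hd : 2 ≤ d) :
    ContinuousOn (fun p : ℝ => frogM d p) (Set.Ioo (1 / ((d : ℝ) + 1)) (1 / 2)) := by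
  rintro p₀ ⟨hp₀, hp₀'⟩
  obtain ⟨p₁, hp₁, hp₁₀⟩ := exists_between hp₀
  obtain ⟨p₂, hp₀₂, hp₂⟩ := exists_between hp₀'
  obtain ⟨L, hL, htail⟩ :=
    exists_frogF_le_frogF_zero hd hp₁ (hp₁₀.trans hp₀₂).le hp₂
  have hF := continuousOn_frogF (d := d) (by omega)
  have hsSup : ContinuousOn (fun p => sSup (frogF d p '' Set.Icc 0 L)) (Set.Icc p₁ p₂) :=
    isCompact_Icc.continuousOn_sSup
      (hF.mono (Set.prod_mono (fun p hp => hp.2.trans_lt hp₂) le_rfl))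
  have hM : ContinuousOn (frogM d) (Set.Icc p₁ p₂) := hsSup.congr fun p hp =>
    csSup_image_Ici_eq_csSup_image_Icc hL
      (hF.comp_continuous (f := fun l => (p, l)) (by fun_prop)
        fun _ => ⟨hp.2.trans_lt hp₂, trivial⟩).continuousOn
      (htail p hp)
  exact (hM.continuousAt (Icc_mem_nhds hp₁₀ hp₀₂)).continuousWithinAt
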